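/- For each n, let Z_{n,1}, ..., Z_{n,n} be independent random variables and let T_n be a square-integrable real random variable measurable with respect to σ(Z_{n,1}, ..., Z_{n,n}) with Var(T_n) > 0, and let T̂_n be its Hájek projection. If lim_{n→∞} Var(T̂_n)/Var(T_n) = 1, then lim_{n→∞} E[(T̂_n − T_n)²]/Var(T_n) = 0. -/

import Mathlib

/-!
Write `gᵢ = E[T | Zᵢ]`, so that `T̂` is `∑ gᵢ` plus a constant and `E[T̂] = E[T]`. The `gᵢ` are
pairwise uncorrelated because the `Zᵢ` are independent, and `Cov(gᵢ, T) = Var(gᵢ)` because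
conditional expectation is an `L²` projection. Hence `Var(T̂) = Cov(T̂, T) = ∑ Var(gᵢ)`, and
`E[(T̂ - T)²] = Var(T̂) - 2 Cov(T̂, T) + Var(T) = Var(T) - Var(T̂)`. Dividing by `Var(T)` turns
the hypothesis on the variance ratio into the conclusion.
-/

open MeasureTheory ProbabilityTheory Filter

/-- The Hájek projection of a square-integrable random variable `T` with respect to the
random variables `Z 1, ..., Z n`:
`T̂ = E[T] + ∑ i, (E[T | Z i] − E[T])`. -/
noncomputable def hajekProjection {Ω 𝒵 : Type*} [MeasurableSpace Ω]
    [m𝒵 : MeasurableSpace 𝒵] (μ : Measure Ω) {n : ℕ} (Z : Fin n → Ω → 𝒵)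
    (T : Ω → ℝ) : Ω → ℝ :=
  fun ω => (∫ x, T x ∂μ) + ∑ i, ((μ[T | m𝒵.comap (Z i)]) ω - ∫ x, T x ∂μ)

section Moments

variable {Ω : Type*} {m m₁ m₂ m0 : MeasurableSpace Ω} {μ : Measure Ω} {X Y : Ω → ℝ}

lemma integral_condExp_mul_self [IsFiniteMeasure μ] (hm : m ≤ m0) (hX : MemLp X 2 μ) :
    μ[μ[X|m] * X] = μ[μ[X|m] ^ 2] := by
  have hXc : MemLp (μ[X|m]) 2 μ := hX.condExp one_le_two
  calc μ[μ[X|m] * X] = μ[μ[μ[X|m] * X|m]] := (integral_condExp hm).symm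
    _ = μ[μ[X|m] * μ[X|m]] := by
      exact integral_congr_ae (condExp_mul_of_stronglyMeasurable_left
        stronglyMeasurable_condExp (hXc.integrable_mul hX) (hX.integrable one_le_two))
    _ = μ[μ[X|m] ^ 2] := by rw [sq]

lemma covariance_condExp_self [IsProbabilityMeasure μ] (hm : m ≤ m0) (hX : MemLp X 2 μ) :
    cov[μ[X|m], X; μ] = Var[μ[X|m]; μ] := by
  have hXc : MemLp (μ[X|m]) 2 μ := hX.condExp one_le_two
  rw [covariance_eq_sub hXc hX, variance_eq_sub hXc, integral_condExp_mul_self hm hX,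
    integral_condExp hm, sq, sq]

lemma covariance_condExp_condExp_eq_zero (h : Indep m₁ m₂ μ) (hX : MemLp X 2 μ)
    (hY : MemLp Y 2 μ) : cov[μ[X|m₁], μ[Y|m₂]; μ] = 0 := by
  refine IndepFun.covariance_eq_zero ?_ (hX.condExp one_le_two) (hY.condExp one_le_two)
  rw [IndepFun_iff_Indep]
  exact indep_of_indep_of_le_right (indep_of_indep_of_le_left h
    stronglyMeasurable_condExp.measurable.comap_le) stronglyMeasurable_condExp.measurable.comap_le

lemma variance_sum_of_pairwise_covariance_eq_zero [IsFiniteMeasure μ] {ι : Type*} [Fintype ι]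
    {X : ι → Ω → ℝ} (hX : ∀ i, MemLp (X i) 2 μ)
    (h : Pairwise fun i j => cov[X i, X j; μ] = 0) :
    Var[fun ω => ∑ i, X i ω; μ] = ∑ i, Var[X i; μ] := by
  rw [variance_fun_sum hX]
  refine Finset.sum_congr rfl fun i _ => ?_
  rw [Finset.sum_eq_single i (fun j _ hji => h hji.symm) (by simp),
    covariance_self (hX i).aemeasurable]

lemma integral_sub_sq_of_integral_eq [IsFiniteMeasure μ] (hX : MemLp X 2 μ) (hY : MemLp Y 2 μ)
    (h : μ[X] = μ[Y]) :
    ∫ ω, (X ω - Y ω) ^ 2 ∂μ = Var[X; μ] - 2 * cov[X, Y; μ] + Var[Y; μ] := by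
  rw [← variance_sub hX hY, variance_eq_integral (hX.sub hY).aemeasurable,
    integral_sub' (hX.integrable one_le_two) (hY.integrable one_le_two), h, sub_self]
  simp

end Moments

section HajekProjection

variable {Ω 𝒵 : Type*} {m0 : MeasurableSpace Ω} [m𝒵 : MeasurableSpace 𝒵] {μ : Measure Ω}
  {n : ℕ} {Z : Fin n → Ω → 𝒵} {T : Ω → ℝ}

lemma hajekProjection_eq_sum_add_const :
    hajekProjection μ Z T = fun ω => ∑ i, μ[T|m𝒵.comap (Z i)] ω + (1 - n) * μ[T] := by
  funext ω
  simp only [hajekProjection, Finset.sum_sub_distrib, Finset.sum_const, Finset.card_univ,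
    Fintype.card_fin, nsmul_eq_mul]
  ring

variable [IsProbabilityMeasure μ]

lemma memLp_hajekProjection (hT : MemLp T 2 μ) : MemLp (hajekProjection μ Z T) 2 μ := by
  have hg (i : Fin n) : MemLp (μ[T|m𝒵.comap (Z i)]) 2 μ := hT.condExp one_le_two
  rw [hajekProjection_eq_sum_add_const]
  exact (memLp_finsetSum _ fun i _ => hg i).add (memLp_const _)

lemma integral_hajekProjection (hZ : ∀ i, Measurable (Z i)) :
    μ[hajekProjection μ Z T] = μ[T] := by
  rw [hajekProjection_eq_sum_add_const, integral_add (integrable_finsetSum _ fun i _ =>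
    integrable_condExp) (integrable_const _), integral_finsetSum _ fun i _ => integrable_condExp]
  simp only [integral_condExp (hZ _).comap_le, Finset.sum_const, Finset.card_univ,
    Fintype.card_fin, nsmul_eq_mul, integral_const, probReal_univ, smul_eq_mul, one_mul]
  ring

lemma variance_hajekProjection (hindep : Pairwise fun i j => IndepFun (Z i) (Z j) μ)
    (hT : MemLp T 2 μ) :
    Var[hajekProjection μ Z T; μ] = ∑ i, Var[μ[T|m𝒵.comap (Z i)]; μ] := by
  have hg (i : Fin n) : MemLp (μ[T|m𝒵.comap (Z i)]) 2 μ := hT.condExp one_le_two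
  rw [hajekProjection_eq_sum_add_const,
    variance_add_const (memLp_finsetSum _ fun i _ => hg i).aestronglyMeasurable]
  exact variance_sum_of_pairwise_covariance_eq_zero hg
    fun i j hij => covariance_condExp_condExp_eq_zero
      ((IndepFun_iff_Indep _ _ _).mp (hindep hij)) hT hT

lemma covariance_hajekProjection_self (hZ : ∀ i, Measurable (Z i)) (hT : MemLp T 2 μ) :
    cov[hajekProjection μ Z T, T; μ] = ∑ i, Var[μ[T|m𝒵.comap (Z i)]; μ] := by
  rw [hajekProjection_eq_sum_add_const, covariance_add_const_left
    (integrable_finsetSum _ fun i _ => integrable_condExp),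
    covariance_fun_sum_left (fun i => hT.condExp one_le_two) hT]
  exact Finset.sum_congr rfl fun i _ => covariance_condExp_self (hZ i).comap_le hT

lemma integral_sq_hajekProjection_sub (hZ : ∀ i, Measurable (Z i))
    (hindep : Pairwise fun i j => IndepFun (Z i) (Z j) μ) (hT : MemLp T 2 μ) :
    ∫ ω, (hajekProjection μ Z T ω - T ω) ^ 2 ∂μ
      = Var[T; μ] - Var[hajekProjection μ Z T; μ] := by
  rw [integral_sub_sq_of_integral_eq (memLp_hajekProjection hT) hT
    (integral_hajekProjection hZ),
    covariance_hajekProjection_self hZ hT, variance_hajekProjection hindep hT]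
  ring

end HajekProjection

lemma tendsto_sub_div_self_of_tendsto_div_self {α : Type*} {l : Filter α} {a b : α → ℝ}
    (h : Tendsto (fun x => b x / a x) l (nhds 1)) :
    Tendsto (fun x => (a x - b x) / a x) l (nhds 0) := by
  have ha : ∀ᶠ x in l, a x ≠ 0 :=
    (h.eventually_ne one_ne_zero).mono fun x hx ha => hx (by simp [ha])
  have h' : Tendsto (fun x => 1 - b x / a x) l (nhds 0) := by
    simpa using (tendsto_const_nhds (x := (1 : ℝ))).sub h
  exact h'.congr' (ha.mono fun x hx => by simp only [sub_div, div_self hx])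

theorem tendsto_sq_diff_hajekProjection_of_variance_ratio_general {Ω 𝒵 : Type*}
    [MeasurableSpace Ω] [m𝒵 : MeasurableSpace 𝒵]
    (μ : Measure Ω) [IsProbabilityMeasure μ]
    (Z : (n : ℕ) → Fin n → Ω → 𝒵)
    (hZmeas : ∀ n i, Measurable (Z n i))
    (hindep : ∀ n, iIndepFun (Z n) μ)
    (T : ℕ → Ω → ℝ)
    (hT2 : ∀ n, MemLp (T n) 2 μ)
    (hratio : Tendsto
      (fun n => variance (hajekProjection μ (Z n) (T n)) μ / variance (T n) μ)
      atTop (nhds 1)) :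
    Tendsto
      (fun n => (∫ ω, (hajekProjection μ (Z n) (T n) ω - T n ω) ^ 2 ∂μ)
        / variance (T n) μ)
      atTop (nhds 0) := by
  refine (tendsto_sub_div_self_of_tendsto_div_self hratio).congr fun n => ?_
  rw [integral_sq_hajekProjection_sub (hZmeas n) (fun i j hij => (hindep n).indepFun hij)
    (hT2 n)]

/-- For each `n`, let `Z n 1, ..., Z n n` be independent random
variables and `T n` a square-integrable real random variable, measurable with respect to
`σ(Z n 1, ..., Z n n)`, with `Var (T n) > 0`, and let `T̂ n` be its Hájek projection.
If `Var (T̂ n) / Var (T n) → 1`, then `E[(T̂ n − T n)²] / Var (T n) → 0`. -/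
theorem tendsto_sq_diff_hajekProjection_of_variance_ratio {Ω 𝒵 : Type*}
    [MeasurableSpace Ω] [m𝒵 : MeasurableSpace 𝒵]
    (μ : Measure Ω) [IsProbabilityMeasure μ]
    (Z : (n : ℕ) → Fin n → Ω → 𝒵)
    (hZmeas : ∀ n i, Measurable (Z n i))
    (hindep : ∀ n, iIndepFun (Z n) μ)
    (T : ℕ → Ω → ℝ)
    (hTmeas : ∀ n, Measurable[⨆ i, m𝒵.comap (Z n i)] (T n))
    (hT2 : ∀ n, MemLp (T n) 2 μ)
    (hTvar : ∀ n, 0 < variance (T n) μ)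
    (hratio : Tendsto
      (fun n => variance (hajekProjection μ (Z n) (T n)) μ / variance (T n) μ)
      atTop (nhds 1)) :
    Tendsto
      (fun n => (∫ ω, (hajekProjection μ (Z n) (T n) ω - T n ω) ^ 2 ∂μ)
        / variance (T n) μ)
      atTop (nhds 0) :=
  tendsto_sq_diff_hajekProjection_of_variance_ratio_general (m𝒵 := m𝒵) μ Z hZmeas hindep T hT2
    hratio
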